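/- Let p_1 = 3, p_2 = 5, p_3 = 7, p_4 = 11, … be the increasing enumeration of the odd prime numbers and fix a natural number m ≥ 2. The constant 1 is best possible on the left: if α' is a real number such that (Π_{n=1}^{m−1} p_n^{2k}/(p_n^{2k} − 1)) · p_m^{2k}/(p_m^{2k} − α') < (π^{2k}(2^{2k} − 1)/(2·(2k)!)) · |B_{2k}| for every natural number k ≥ 1, then α' ≤ 1. -/

import Mathlib

open Finset

/-- The `n`-th odd prime (0-indexed): `oddPrime 0 = 3`, `oddPrime 1 = 5`, etc. -/
noncomputable def oddPrime (n : ℕ) : ℕ := Nat.nth (fun p => p.Prime ∧ p ≠ 2) n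

/-!
The right-hand side is `(1 - 2^{-K}) ζ(K)` with `K = 2k`, and by the Euler product the finite
product over the first `m - 1` odd primes is `(1 - 2^{-K}) S`, where `S` sums `n^{-K}` over the
`P`-smooth numbers, `P = p_m`. Every positive integer below `P` is `P`-smooth, so
`ζ(K) ≤ S + P^{-K} + T`, where `T = ∑_{n > P} n^{-K}`; since `S ≥ 1` and `(1 - y)⁻¹ ≥ 1 + y`,
the hypothesis forces `α' P^{-K} < P^{-K} + T`, i.e. `α' < 1 + P^K T`. By dominated convergence
`P^K T = ∑_{n > P} (P / n)^K → 0`, so `α' > 1` is impossible for large `k`.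
-/

open Filter Topology

lemma setOf_prime_ne_two_infinite : {p : ℕ | p.Prime ∧ p ≠ 2}.Infinite :=
  (Nat.infinite_setOfPred_prime.sdiff (Set.finite_singleton 2)).mono fun _ hp => hp

lemma oddPrime_prime_and_ne_two (n : ℕ) : (oddPrime n).Prime ∧ oddPrime n ≠ 2 :=
  Nat.nth_mem_of_infinite setOf_prime_ne_two_infinite n

lemma two_lt_oddPrime (n : ℕ) : 2 < oddPrime n :=
  (oddPrime_prime_and_ne_two n).1.two_le.lt_of_ne' (oddPrime_prime_and_ne_two n).2

lemma one_lt_oddPrime_cast (n : ℕ) : (1 : ℝ) < oddPrime n := by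
  exact_mod_cast (two_lt_oddPrime n).trans' one_lt_two

lemma oddPrime_strictMono : StrictMono oddPrime :=
  Nat.nth_strictMono setOf_prime_ne_two_infinite

lemma primesBelow_oddPrime (M : ℕ) :
    (oddPrime M).primesBelow = insert 2 ((range M).image oddPrime) := by
  ext q
  simp only [Nat.mem_primesBelow, mem_insert, mem_image, mem_range]
  constructor
  · rintro ⟨hqM, hq⟩
    refine or_iff_not_imp_left.2 fun hq2 => ?_
    have hcount := Nat.nth_count (p := fun p => p.Prime ∧ p ≠ 2) ⟨hq, hq2⟩
    refine ⟨_, ?_, hcount⟩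
    rwa [← oddPrime_strictMono.lt_iff_lt, oddPrime, hcount]
  · rintro (rfl | ⟨n, hn, rfl⟩)
    · exact ⟨two_lt_oddPrime M, Nat.prime_two⟩
    · exact ⟨oddPrime_strictMono hn, (oddPrime_prime_and_ne_two n).1⟩

lemma prod_primesBelow_oddPrime {β : Type*} [CommMonoid β] (f : ℕ → β) (M : ℕ) :
    ∏ p ∈ (oddPrime M).primesBelow, f p = f 2 * ∏ n ∈ range M, f (oddPrime n) := by
  rw [primesBelow_oddPrime, prod_insert, prod_image oddPrime_strictMono.injective.injOn]
  intro h2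
  obtain ⟨n, -, hn⟩ := mem_image.mp h2
  exact (oddPrime_prime_and_ne_two n).2 hn

noncomputable def invPow (K : ℕ) : ℕ →* ℝ where
  toFun n := ((n : ℝ) ^ K)⁻¹
  map_one' := by simp
  map_mul' a b := by push_cast; rw [mul_pow, mul_inv]

@[simp] lemma invPow_apply (K n : ℕ) : invPow K n = ((n : ℝ) ^ K)⁻¹ := rfl

lemma invPow_nonneg (K n : ℕ) : 0 ≤ invPow K n := by
  rw [invPow_apply]; positivity

lemma summable_invPow {K : ℕ} (hK : 1 < K) : Summable (invPow K) :=
  Real.summable_nat_pow_inv.mpr hK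

lemma tsum_invPow_two_mul {k : ℕ} (hk : k ≠ 0) :
    ∑' n, invPow (2 * k) n =
      2 ^ (2 * k - 1) * Real.pi ^ (2 * k) * |(bernoulli (2 * k) : ℝ)| / (2 * k).factorial := by
  have hzeta := (hasSum_zeta_nat hk).tsum_eq
  simp only [one_div] at hzeta
  have habs := abs_of_nonneg (tsum_nonneg (invPow_nonneg (2 * k)) : 0 ≤ ∑' n, invPow (2 * k) n)
  simp only [invPow_apply] at habs ⊢
  rw [← habs, hzeta, abs_div, abs_mul, abs_mul, abs_mul, abs_pow, abs_neg, abs_one, one_pow,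
    one_mul, abs_of_pos (by positivity : (0 : ℝ) < 2 ^ (2 * k - 1)),
    abs_of_pos (pow_pos Real.pi_pos _), Nat.abs_cast]

lemma pi_pow_mul_abs_bernoulli_eq {k : ℕ} (hk : k ≠ 0) :
    Real.pi ^ (2 * k) * ((2 : ℝ) ^ (2 * k) - 1) / (2 * ((2 * k).factorial : ℝ)) *
        |(bernoulli (2 * k) : ℝ)| =
      (1 - ((2 : ℝ) ^ (2 * k))⁻¹) * ∑' n, invPow (2 * k) n := by
  have h2 : (2 : ℝ) ^ (2 * k) = 2 * 2 ^ (2 * k - 1) := by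
    rw [← pow_succ']; congr 1; omega
  rw [tsum_invPow_two_mul hk, h2]
  field_simp

lemma tsum_le_tsum_smoothNumbers_add_tsum_nat_add {f : ℕ → ℝ} (hf : 0 ≤ f) (hsum : Summable f)
    (hf₀ : f 0 = 0) (N : ℕ) :
    ∑' n, f n ≤ ∑' n : N.smoothNumbers, f n + ∑' n, f (n + N) := by
  have hle : ∑ i ∈ range N, f i ≤ ∑' n : N.smoothNumbers, f n := by
    rw [_root_.tsum_subtype]
    refine le_of_eq_of_le (sum_congr rfl fun i hi => ?_)
      ((hsum.indicator _).sum_le_tsum _ fun i _ => Set.indicator_nonneg (fun j _ => hf j) i)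
    rcases i.eq_zero_or_pos with rfl | hi₀
    · simp [hf₀, Set.indicator_apply]
    · exact (Set.indicator_of_mem (Nat.mem_smoothNumbers_of_lt hi₀ (mem_range.mp hi)) f).symm
  rw [← hsum.sum_add_tsum_nat_add N]
  gcongr

lemma tendsto_pow_mul_tsum_invPow_nat_add (N : ℕ) :
    Tendsto (fun K => (N : ℝ) ^ K * ∑' n, invPow K (n + (N + 1))) atTop (𝓝 0) := by
  have hratio (n : ℕ) : 0 ≤ (N : ℝ) / (n + N + 1) ∧ (N : ℝ) / (n + N + 1) < 1 :=
    ⟨by positivity, (div_lt_one (by positivity)).2 (by linarith)⟩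
  have hterm (K n : ℕ) : (N : ℝ) ^ K * invPow K (n + (N + 1)) = ((N : ℝ) / (n + N + 1)) ^ K := by
    rw [invPow_apply, div_pow]; push_cast; ring
  have hbound : Summable fun n : ℕ => ((N : ℝ) / (n + N + 1)) ^ 2 :=
    (((summable_nat_add_iff (N + 1)).mpr (summable_invPow one_lt_two)).mul_left
      ((N : ℝ) ^ 2)).congr (hterm 2)
  simp_rw [← tsum_mul_left, hterm]
  have := tendsto_tsum_of_dominated_convergence hbound
    (f := fun K (n : ℕ) => ((N : ℝ) / (n + N + 1)) ^ K) (g := fun _ => 0)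
    (fun n => tendsto_pow_atTop_nhds_zero_of_lt_one (hratio n).1 (hratio n).2)
    ((eventually_ge_atTop 2).mono fun K hK n => by
      rw [Real.norm_of_nonneg (pow_nonneg (hratio n).1 K)]
      exact pow_le_pow_of_le_one (hratio n).1 (hratio n).2.le hK)
  simpa using this

lemma div_sub_eq_inv_one_sub_mul_inv {F : Type*} [Field F] {t : F} (ht : t ≠ 0) (a : F) :
    t / (t - a) = (1 - a * t⁻¹)⁻¹ := by
  rw [← div_eq_mul_inv, one_sub_div ht, inv_div]

lemma lt_of_mul_inv_one_sub_lt_add {S y z : ℝ} (hS : 1 ≤ S) (hy₀ : 0 ≤ y) (hy₁ : y < 1)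
    (h : S * (1 - y)⁻¹ < S + z) : y < z := by
  have hgeom : 1 + y ≤ (1 - y)⁻¹ := by
    rw [← one_div, le_div_iff₀ (by linarith)]
    nlinarith
  nlinarith

lemma prod_range_oddPrime_pow_div_pow_sub_one (M : ℕ) {K : ℕ} (hK : 1 < K) :
    ∏ n ∈ range M, ((oddPrime n : ℝ) ^ K / ((oddPrime n : ℝ) ^ K - 1)) =
      (1 - ((2 : ℝ) ^ K)⁻¹) * ∑' n : (oddPrime M).smoothNumbers, invPow K n := by
  have h2 : (1 : ℝ) - (2 ^ K)⁻¹ ≠ 0 :=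
    (sub_pos.2 (inv_lt_one_of_one_lt₀ (one_lt_pow₀ one_lt_two (by omega)))).ne'
  rw [← EulerProduct.prod_primesBelow_geometric_eq_tsum_smoothNumbers (summable_invPow hK),
    prod_primesBelow_oddPrime]
  simp only [invPow_apply, Nat.cast_ofNat]
  rw [← mul_assoc, mul_inv_cancel₀ h2, one_mul]
  refine prod_congr rfl fun n _ => ?_
  rw [div_sub_eq_inv_one_sub_mul_inv (pow_pos ((one_lt_oddPrime_cast n).trans' one_pos) K).ne',
    one_mul]

lemma lt_one_add_pow_mul_tsum_invPow_of_lt (M : ℕ) {K : ℕ} (hK : 1 < K) {α : ℝ} (hα : 0 ≤ α)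
    (hαP : α < (oddPrime M : ℝ) ^ K)
    (h : (∏ n ∈ range M, ((oddPrime n : ℝ) ^ K / ((oddPrime n : ℝ) ^ K - 1))) *
        ((oddPrime M : ℝ) ^ K / ((oddPrime M : ℝ) ^ K - α)) <
      (1 - ((2 : ℝ) ^ K)⁻¹) * ∑' n, invPow K n) :
    α < 1 + (oddPrime M : ℝ) ^ K * ∑' n, invPow K (n + (oddPrime M + 1)) := by
  have hsum := summable_invPow hK
  have h2 : 0 < 1 - ((2 : ℝ) ^ K)⁻¹ :=
    sub_pos.2 (inv_lt_one_of_one_lt₀ (one_lt_pow₀ one_lt_two (by omega)))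
  set P := oddPrime M
  have hPK : 0 < (P : ℝ) ^ K := pow_pos ((one_lt_oddPrime_cast M).trans' one_pos) K
  set S := ∑' n : P.smoothNumbers, invPow K n
  set T := ∑' n, invPow K (n + (P + 1))
  have hS : 1 ≤ S := by
    refine le_of_eq_of_le ?_ ((hsum.subtype _).le_tsum
      ⟨1, Nat.mem_smoothNumbers_of_lt one_pos ((two_lt_oddPrime M).trans' one_lt_two)⟩
      fun j _ => invPow_nonneg K j)
    simp
  rw [prod_range_oddPrime_pow_div_pow_sub_one M hK, div_sub_eq_inv_one_sub_mul_inv hPK.ne',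
    mul_assoc, mul_lt_mul_iff_right₀ h2] at h
  have hZ : ∑' n, invPow K n ≤ S + (((P : ℝ) ^ K)⁻¹ + T) := by
    have := tsum_le_tsum_smoothNumbers_add_tsum_nat_add (invPow_nonneg K) hsum
      (by simp; omega) P
    rw [((summable_nat_add_iff P).mpr hsum).tsum_eq_zero_add] at this
    simpa only [zero_add, add_assoc, add_comm 1 P, invPow_apply K P] using this
  have hy : α * ((P : ℝ) ^ K)⁻¹ < 1 := by rwa [mul_inv_lt_iff₀ hPK, one_mul]
  have hlt := lt_of_mul_inv_one_sub_lt_add hS (by positivity) hy (h.trans_le hZ)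
  calc α = (P : ℝ) ^ K * (α * ((P : ℝ) ^ K)⁻¹) := by
        rw [mul_comm α, mul_inv_cancel_left₀ hPK.ne']
    _ < (P : ℝ) ^ K * (((P : ℝ) ^ K)⁻¹ + T) := (mul_lt_mul_iff_right₀ hPK).2 hlt
    _ = 1 + (P : ℝ) ^ K * T := by rw [mul_add, mul_inv_cancel₀ hPK.ne']

theorem bernoulli_lower_bound_alpha'_best_general (m : ℕ) (α' : ℝ)
    (h : ∀ k : ℕ, 1 ≤ k →
      (∏ n ∈ Finset.range (m - 1),
          ((oddPrime n : ℝ) ^ (2 * k) / ((oddPrime n : ℝ) ^ (2 * k) - 1))) *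
        ((oddPrime (m - 1) : ℝ) ^ (2 * k) / ((oddPrime (m - 1) : ℝ) ^ (2 * k) - α'))
      < (Real.pi ^ (2 * k) * ((2 : ℝ) ^ (2 * k) - 1) / (2 * (Nat.factorial (2 * k) : ℝ))) *
          |(bernoulli (2 * k) : ℝ)|) :
    α' ≤ 1 := by
  by_contra! hα
  set P := oddPrime (m - 1)
  have hdouble : Tendsto (fun k : ℕ => 2 * k) atTop atTop :=
    tendsto_atTop_mono (fun k => Nat.le_mul_of_pos_left k two_pos) tendsto_id
  have hlarge : ∀ᶠ K in atTop,
      α' < (P : ℝ) ^ K ∧ (P : ℝ) ^ K * ∑' n, invPow K (n + (P + 1)) < α' - 1 :=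
    ((tendsto_pow_atTop_atTop_of_one_lt (one_lt_oddPrime_cast _)).eventually_gt_atTop α').and
      ((tendsto_pow_mul_tsum_invPow_nat_add P).eventually_lt_const (sub_pos.2 hα))
  obtain ⟨k, hk, hαP, htail⟩ := ((eventually_ge_atTop 1).and (hdouble.eventually hlarge)).exists
  have hlt := lt_one_add_pow_mul_tsum_invPow_of_lt (m - 1) (K := 2 * k) (by omega) (by linarith)
    hαP (pi_pow_mul_abs_bernoulli_eq (k := k) (by omega) ▸ h k hk)
  linarith

theorem bernoulli_lower_bound_alpha'_best (m : ℕ) (hm : 2 ≤ m) (α' : ℝ)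
    (h : ∀ k : ℕ, 1 ≤ k →
      (∏ n ∈ Finset.range (m - 1),
          ((oddPrime n : ℝ) ^ (2 * k) / ((oddPrime n : ℝ) ^ (2 * k) - 1))) *
        ((oddPrime (m - 1) : ℝ) ^ (2 * k) / ((oddPrime (m - 1) : ℝ) ^ (2 * k) - α'))
      < (Real.pi ^ (2 * k) * ((2 : ℝ) ^ (2 * k) - 1) / (2 * (Nat.factorial (2 * k) : ℝ))) *
          |(bernoulli (2 * k) : ℝ)|) :
    α' ≤ 1 :=
  bernoulli_lower_bound_alpha'_best_general m α' h
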